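/- arXiv:math/0702338 — 5 statements merged into one kernel-verified Lean document; each statement's English description precedes it below -/
import Mathlib

section
/- Assume condition (K1): for every Λ ∈ B₀(X), ∫_Γ ∑_{x∈γ} ∫_X c(x,y,γ\{x})·(χ_Λ(x) + χ_Λ(y)) ν(dy) μ(dγ) < ∞. Then for all cylinder functions F, G ∈ FC_b the Kawasaki form integral is absolutely convergent: ∫_Γ ∑_{x∈γ} ∫_X c(x,y,γ\{x}) |(D_{xy}^{-+} F)(γ)|·|(D_{xy}^{-+} G)(γ)| ν(dy) μ(dγ) < ∞. -/
open MeasureTheory Set ENNReal Filter Topology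

noncomputable section

/-- The configuration space over `X`: the set of all locally finite subsets of `X`. -/
def Config (X : Type*) [TopologicalSpace X] : Type _ :=
  {γ : Set X // ∀ K : Set X, IsCompact K → (γ ∩ K).Finite}

namespace Config

variable {X : Type*} [TopologicalSpace X]

/-- Removal of a point from a configuration, `γ \ {x}`. -/
def erase (γ : Config X) (x : X) : Config X :=
  ⟨γ.1 \ {x}, fun K hK => (γ.2 K hK).subset fun _ hz => ⟨hz.1.1, hz.2⟩⟩

/-- Insertion of a point into a configuration, `γ ∪ {x}`. -/
def ins (γ : Config X) (x : X) : Config X :=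
  ⟨insert x γ.1, fun K hK => ((γ.2 K hK).insert x).subset (by
    rintro z ⟨hz1, hz2⟩
    rcases Set.mem_insert_iff.mp hz1 with rfl | h
    · exact Set.mem_insert _ _
    · exact Set.mem_insert_of_mem _ ⟨h, hz2⟩)⟩

end Config

variable {X : Type*} [TopologicalSpace X]

/-- Cylinder functions `FC_b`: `F(γ) = g(⟨φ₁,γ⟩, …, ⟨φ_N,γ⟩)` with the `φᵢ` continuous
with compact support and `g` bounded continuous; here `⟨φ,γ⟩ = ∑_{x∈γ} φ(x)`. -/
def IsCylinder (F : Config X → ℝ) : Prop :=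
  ∃ (N : ℕ) (φ : Fin N → X → ℝ) (g : (Fin N → ℝ) → ℝ),
    (∀ i, Continuous (φ i)) ∧ (∀ i, HasCompactSupport (φ i)) ∧
      Continuous g ∧ (∃ C : ℝ, ∀ v, |g v| ≤ C) ∧
      ∀ γ : Config X, F γ = g fun i => ∑' x : γ.1, φ i x

/-- `(D_x^- F)(γ) = F(γ \ {x}) - F(γ)`. -/
def Dm (F : Config X → ℝ) (x : X) (γ : Config X) : ℝ := F (γ.erase x) - F γ

/-- `(D_x^+ F)(γ) = F(γ ∪ {x}) - F(γ)`. -/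
def Dp (F : Config X → ℝ) (x : X) (γ : Config X) : ℝ := F (γ.ins x) - F γ

/-- `(D_{xy}^{-+} F)(γ) = F((γ \ {x}) ∪ {y}) - F(γ)`. -/
def Dpm (F : Config X → ℝ) (x y : X) (γ : Config X) : ℝ := F ((γ.erase x).ins y) - F γ

variable [MeasurableSpace X]

/-- `Λ ∈ B₀(X)`: a relatively compact Borel set. -/
def IsB0 (Λ : Set X) : Prop := MeasurableSet Λ ∧ IsCompact (closure Λ)

/-- The σ-algebra on `Config X` generated by the counting maps `γ ↦ |γ ∩ Λ|`, `Λ ∈ B₀(X)`. -/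
instance : MeasurableSpace (Config X) :=
  ⨆ (Λ : Set X) (_ : IsB0 Λ),
    MeasurableSpace.comap (fun γ : Config X => (γ.1 ∩ Λ).ncard) ⊤

/-- The Mecke identity: `r` is a Papangelou intensity for `μ`, i.e.
`∫ ∑_{x∈γ} H(x,γ) μ(dγ) = ∫ ∫ r(x,γ) H(x,γ∪{x}) ν(dx) μ(dγ)` for measurable `H ≥ 0`. -/
def MeckeIdentity (ν : Measure X) (μ : Measure (Config X)) (r : X → Config X → ℝ) : Prop :=
  ∀ H : X → Config X → ℝ≥0∞, Measurable (fun p : X × Config X => H p.1 p.2) →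
    ∫⁻ γ, ∑' x : γ.1, H (x : X) γ ∂μ =
      ∫⁻ γ, ∫⁻ x, ENNReal.ofReal (r x γ) * H x (γ.ins x) ∂ν ∂μ

/-- Condition (G1): `∫ ∑_{x∈γ∩Λ} d(x,γ\{x}) μ(dγ) < ∞` for every `Λ ∈ B₀(X)`. -/
def CondG1 (μ : Measure (Config X)) (d : X → Config X → ℝ) : Prop :=
  ∀ Λ : Set X, IsB0 Λ →
    ∫⁻ γ, ∑' x : ↥(γ.1 ∩ Λ), ENNReal.ofReal (d (x : X) (γ.erase (x : X))) ∂μ < ⊤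

/-- Condition (K1): `∫ ∑_{x∈γ} ∫ c(x,y,γ\{x})(χ_Λ(x)+χ_Λ(y)) ν(dy) μ(dγ) < ∞`
for every `Λ ∈ B₀(X)`. -/
def CondK1 (ν : Measure X) (μ : Measure (Config X)) (c : X → X → Config X → ℝ) : Prop :=
  ∀ Λ : Set X, IsB0 Λ →
    ∫⁻ γ, ∑' x : γ.1, ∫⁻ y,
        ENNReal.ofReal (c (x : X) y (γ.erase (x : X))) *
          (Λ.indicator (1 : X → ℝ≥0∞) (x : X) + Λ.indicator (1 : X → ℝ≥0∞) y) ∂ν ∂μ < ⊤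

/-- The Glauber Dirichlet form `ℰ_G(F,G)`. -/
def glauberE (μ : Measure (Config X)) (d : X → Config X → ℝ) (F G : Config X → ℝ) : ℝ :=
  ∫ γ, (∑' x : γ.1, d (x : X) (γ.erase (x : X)) * Dm F (x : X) γ * Dm G (x : X) γ) ∂μ

/-- The Kawasaki Dirichlet form `ℰ_K(F,G)`. -/
def kawasakiE (ν : Measure X) (μ : Measure (Config X)) (c : X → X → Config X → ℝ)
    (F G : Config X → ℝ) : ℝ :=
  ∫ γ, (∑' x : γ.1, ∫ y, c (x : X) y (γ.erase (x : X)) * Dpm F (x : X) y γ *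
    Dpm G (x : X) y γ ∂ν) ∂μ

/-! A cylinder function only sees the configuration inside the compact set `Λ` carrying the
supports of its test functions, so `D_{xy}^{-+} F` vanishes unless `x ∈ Λ` or `y ∈ Λ`, and it is
bounded by `2 sup |F|`. Hence the integrand is dominated by a constant times the (K1) integrand
`c(x,y,γ\{x}) (χ_Λ(x) + χ_Λ(y))`. -/

lemma tsum_subtype_eq_of_inter_eq {β α : Type*} [AddCommMonoid α] [TopologicalSpace α]
    {f : β → α} {s t Λ : Set β} (hf : Function.support f ⊆ Λ) (h : s ∩ Λ = t ∩ Λ) :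
    ∑' x : s, f x = ∑' x : t, f x := by
  have hsupp : s ∩ Function.support f = t ∩ Function.support f := by
    rw [← inter_eq_right.mpr hf, ← inter_assoc, h, inter_assoc]
  rw [tsum_subtype, tsum_subtype, ← indicator_inter_support, hsupp, indicator_inter_support]

lemma one_le_indicator_add_indicator {β : Type*} {Λ : Set β} {x y : β} (h : x ∈ Λ ∨ y ∈ Λ) :
    1 ≤ Λ.indicator (1 : β → ℝ≥0∞) x + Λ.indicator 1 y := by
  rcases h with hx | hy
  · exact (indicator_of_mem hx 1).symm.le.trans le_self_add
  · exact (indicator_of_mem hy 1).symm.le.trans le_add_self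

lemma lintegral_tsum_lintegral_le_const_mul {Ω α β : Type*} [MeasurableSpace Ω]
    [MeasurableSpace β] {μ : Measure Ω} {ν : Measure β} {s : Ω → Set α}
    {f g : Ω → α → β → ℝ≥0∞} {K : ℝ≥0∞} (hK : K ≠ ⊤) (h : ∀ ω x y, f ω x y ≤ K * g ω x y) :
    ∫⁻ ω, ∑' x : s ω, ∫⁻ y, f ω x y ∂ν ∂μ ≤ K * ∫⁻ ω, ∑' x : s ω, ∫⁻ y, g ω x y ∂ν ∂μ :=
  calc _ ≤ ∫⁻ ω, ∑' x : s ω, ∫⁻ y, K * g ω x y ∂ν ∂μ :=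
        lintegral_mono fun ω => ENNReal.tsum_le_tsum fun x => lintegral_mono fun y => h ω x y
    _ = _ := by
        simp_rw [lintegral_const_mul' K _ hK, ENNReal.tsum_mul_left]
        exact lintegral_const_mul' K _ hK

section

variable {X : Type*} [TopologicalSpace X]

def IsLocalizedIn (F : Config X → ℝ) (Λ : Set X) : Prop :=
  ∀ γ γ' : Config X, γ.1 ∩ Λ = γ'.1 ∩ Λ → F γ = F γ'

lemma Config.erase_ins_inter_eq {Λ : Set X} {x y : X} (hx : x ∉ Λ) (hy : y ∉ Λ)
    (γ : Config X) : ((γ.erase x).ins y).1 ∩ Λ = γ.1 ∩ Λ := by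
  ext z
  by_cases hzy : z = y
  · subst hzy
    simp [hy]
  by_cases hzx : z = x
  · subst hzx
    simp [hx]
  simp [Config.ins, Config.erase, hzx, hzy]

namespace IsCylinder

variable {F : Config X → ℝ}

lemma exists_isLocalizedIn (hF : IsCylinder F) :
    ∃ Λ : Set X, IsClosed Λ ∧ IsCompact Λ ∧ IsLocalizedIn F Λ := by
  obtain ⟨N, φ, g, -, hφs, -, -, hrep⟩ := hF
  refine ⟨⋃ i, tsupport (φ i), isClosed_iUnion_of_finite fun i => isClosed_tsupport _,
    isCompact_iUnion hφs, fun γ γ' h => ?_⟩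
  rw [hrep, hrep]
  congr 1
  funext i
  exact tsum_subtype_eq_of_inter_eq
    ((subset_tsupport _).trans (subset_iUnion (fun i => tsupport (φ i)) i)) h

lemma exists_abs_le (hF : IsCylinder F) : ∃ C, ∀ γ, |F γ| ≤ C := by
  obtain ⟨N, φ, g, -, -, -, ⟨C, hC⟩, hrep⟩ := hF
  exact ⟨C, fun γ => hrep γ ▸ hC _⟩

end IsCylinder

lemma abs_Dpm_le {F : Config X → ℝ} {C : ℝ} (hC : ∀ γ, |F γ| ≤ C) (x y : X) (γ : Config X) :
    |Dpm F x y γ| ≤ 2 * C :=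
  calc |Dpm F x y γ| ≤ |F ((γ.erase x).ins y)| + |F γ| := abs_sub _ _
    _ ≤ 2 * C := by linarith [hC ((γ.erase x).ins y), hC γ]

lemma IsLocalizedIn.Dpm_eq_zero {F : Config X → ℝ} {Λ : Set X} (hF : IsLocalizedIn F Λ)
    {x y : X} (hx : x ∉ Λ) (hy : y ∉ Λ) (γ : Config X) : Dpm F x y γ = 0 :=
  sub_eq_zero.mpr (hF _ _ (Config.erase_ins_inter_eq hx hy γ))

lemma ofReal_abs_Dpm_le_indicator {F : Config X → ℝ} {Λ : Set X} {C : ℝ}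
    (hloc : IsLocalizedIn F Λ) (hC : ∀ γ, |F γ| ≤ C) (x y : X) (γ : Config X) :
    ENNReal.ofReal |Dpm F x y γ| ≤
      ENNReal.ofReal (2 * C) * (Λ.indicator 1 x + Λ.indicator 1 y) := by
  by_cases hxy : x ∈ Λ ∨ y ∈ Λ
  · calc ENNReal.ofReal |Dpm F x y γ| ≤ ENNReal.ofReal (2 * C) :=
          ENNReal.ofReal_le_ofReal (abs_Dpm_le hC x y γ)
      _ ≤ _ := le_mul_of_one_le_right zero_le (one_le_indicator_add_indicator hxy)
  · rw [not_or] at hxy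
    simp [hloc.Dpm_eq_zero hxy.1 hxy.2]

lemma ofReal_mul_abs_Dpm_mul_abs_Dpm_le {F G : Config X → ℝ} {Λ : Set X} {CF CG : ℝ}
    (hloc : IsLocalizedIn F Λ) (hCF : ∀ γ, |F γ| ≤ CF) (hCG : ∀ γ, |G γ| ≤ CG) (a : ℝ)
    (x y : X) (γ : Config X) :
    ENNReal.ofReal (a * |Dpm F x y γ| * |Dpm G x y γ|) ≤
      ENNReal.ofReal (2 * CF) * ENNReal.ofReal (2 * CG) *
        (ENNReal.ofReal a * (Λ.indicator 1 x + Λ.indicator 1 y)) := by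
  rw [ENNReal.ofReal_mul' (abs_nonneg _), ENNReal.ofReal_mul' (abs_nonneg _)]
  calc _ ≤ ENNReal.ofReal a * (ENNReal.ofReal (2 * CF) * (Λ.indicator 1 x + Λ.indicator 1 y)) *
        ENNReal.ofReal (2 * CG) := by
        gcongr
        · exact ofReal_abs_Dpm_le_indicator hloc hCF x y γ
        · exact abs_Dpm_le hCG x y γ
    _ = _ := by ring

end

theorem kawasaki_form_absolutely_convergent_general {X : Type*} [TopologicalSpace X]
    [MeasurableSpace X] [BorelSpace X]
    (ν : Measure X)
    (μ : Measure (Config X))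
    (c : X → X → Config X → ℝ)
    (hK1 : CondK1 ν μ c)
    (F G : Config X → ℝ) (hF : IsCylinder F) (hG : IsCylinder G) :
    ∫⁻ γ, ∑' x : γ.1, ∫⁻ y,
        ENNReal.ofReal (c (x : X) y (γ.erase (x : X)) *
          |Dpm F (x : X) y γ| * |Dpm G (x : X) y γ|) ∂ν ∂μ < ⊤ := by
  obtain ⟨Λ, hΛc, hΛk, hloc⟩ := hF.exists_isLocalizedIn
  obtain ⟨CF, hCF⟩ := hF.exists_abs_le
  obtain ⟨CG, hCG⟩ := hG.exists_abs_le
  have hΛ : IsB0 Λ := ⟨hΛc.measurableSet, by rwa [hΛc.closure_eq]⟩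
  calc _ ≤ ENNReal.ofReal (2 * CF) * ENNReal.ofReal (2 * CG) *
        ∫⁻ γ, ∑' x : γ.1, ∫⁻ y, ENNReal.ofReal (c (x : X) y (γ.erase (x : X))) *
          (Λ.indicator 1 (x : X) + Λ.indicator 1 y) ∂ν ∂μ :=
        lintegral_tsum_lintegral_le_const_mul (s := fun γ => γ.1) (by finiteness)
          fun γ x y => ofReal_mul_abs_Dpm_mul_abs_Dpm_le hloc hCF hCG (c x y (γ.erase x)) x y γ
    _ < ⊤ := ENNReal.mul_lt_top (by finiteness) (hK1 Λ hΛ)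

/-- Under condition (K1), for all cylinder functions `F, G ∈ FC_b` the Kawasaki form
integral is absolutely convergent. -/
theorem kawasaki_form_absolutely_convergent {X : Type*} [TopologicalSpace X]
    [LocallyCompactSpace X] [SecondCountableTopology X] [T2Space X]
    [MeasurableSpace X] [BorelSpace X]
    (ν : Measure X) [ν.Regular] [NullSingletonClass ν]
    (μ : Measure (Config X)) [IsProbabilityMeasure μ]
    (c : X → X → Config X → ℝ) (hc0 : ∀ x y γ, 0 ≤ c x y γ)
    (hcm : Measurable fun p : X × X × Config X => c p.1 p.2.1 p.2.2)
    (hK1 : CondK1 ν μ c)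
    (F G : Config X → ℝ) (hF : IsCylinder F) (hG : IsCylinder G) :
    ∫⁻ γ, ∑' x : γ.1, ∫⁻ y,
        ENNReal.ofReal (c (x : X) y (γ.erase (x : X)) *
          |Dpm F (x : X) y γ| * |Dpm G (x : X) y γ|) ∂ν ∂μ < ⊤ :=
  kawasaki_form_absolutely_convergent_general ν μ c hK1 F G hF hG
end
end

section
/- Assume the Mecke identity with Papangelou intensity r and condition (G1): for every Λ ∈ B₀(X), ∫_Γ ∑_{x∈γ∩Λ} d(x,γ\{x}) μ(dγ) < ∞. If F, G ∈ FC_b and F = 0 μ-almost everywhere, then ℰ_G(F,G) = 0, where ℰ_G(F,G) := ∫_Γ ∑_{x∈γ} d(x,γ\{x}) (D_x^- F)(γ)(D_x^- G)(γ) μ(dγ). -/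
open MeasureTheory Set ENNReal Filter Topology

noncomputable section

variable {X : Type*} [TopologicalSpace X]

variable [MeasurableSpace X]

/-! The Mecke identity makes the removal of a point preserve `μ`-null sets. For a measurable
`μ`-null set `N`, it turns `∫ ∑_{x∈γ} 1_N(γ \ {x}) μ(dγ)` into
`∫ ∫ r(x,γ) 1_N((γ ∪ {x}) \ {x}) ν(dx) μ(dγ)`; since `γ` is countable and `ν` has no atoms,
`(γ ∪ {x}) \ {x} = γ` for `ν`-a.e. `x`, so this vanishes. Taking for `N` a null set off which
`F = 0`, for `μ`-a.e. `γ` the function `F` vanishes at `γ` and at every `γ \ {x}`, `x ∈ γ`, so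
every term `d(x, γ \ {x}) (D_x^- F)(γ) (D_x^- G)(γ)` of the integrand of `ℰ_G(F,G)` is zero. -/

section Topology

variable {Y : Type*} [TopologicalSpace Y]

namespace Config

theorem countable [SigmaCompactSpace Y] (γ : Config Y) : γ.1.Countable := by
  rw [← inter_univ γ.1, ← iUnion_compactCovering Y, inter_iUnion]
  exact countable_iUnion fun n => (γ.2 _ (isCompact_compactCovering Y n)).countable

theorem isClosed [T1Space Y] [WeaklyLocallyCompactSpace Y] (γ : Config Y) : IsClosed γ.1 := by
  refine isOpen_compl_iff.mp (isOpen_iff_forall_mem_open.mpr fun x hx => ?_)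
  obtain ⟨K, hK, hKx⟩ := exists_compact_mem_nhds x
  exact ⟨interior K \ (γ.1 ∩ K), fun y hy hyγ => hy.2 ⟨hyγ, interior_subset hy.1⟩,
    isOpen_interior.sdiff (γ.2 K hK).isClosed, mem_interior_iff_mem_nhds.mpr hKx, fun h => hx h.1⟩

theorem ins_erase_of_notMem {γ : Config Y} {x : Y} (hx : x ∉ γ.1) : (γ.ins x).erase x = γ :=
  Subtype.ext (insert_sdiff_self_of_notMem hx)

end Config

theorem exists_mem_countableBasis_isCompact_closure [R1Space Y] [LocallyCompactSpace Y]
    [SecondCountableTopology Y] {x : Y} {V : Set Y} (hV : IsOpen V) (hx : x ∈ V) :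
    ∃ U ∈ TopologicalSpace.countableBasis Y, IsCompact (closure U) ∧ x ∈ U ∧ U ⊆ V := by
  obtain ⟨K, hK, hxK, hKV⟩ := exists_compact_subset hV hx
  obtain ⟨U, hU, hxU, hUK⟩ :=
    (TopologicalSpace.isBasis_countableBasis Y).exists_subset_of_mem_open hxK isOpen_interior
  exact ⟨U, hU, hK.closure_of_subset (hUK.trans interior_subset), hxU,
    (hUK.trans interior_subset).trans hKV⟩

end Topology

theorem Config.finite_inter (γ : Config X) {Λ : Set X} (hΛ : IsB0 Λ) : (γ.1 ∩ Λ).Finite :=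
  (γ.2 _ hΛ.2).subset (inter_subset_inter_right _ subset_closure)

theorem measurable_ncard_inter {Λ : Set X} (hΛ : IsB0 Λ) :
    Measurable fun γ : Config X => (γ.1 ∩ Λ).ncard :=
  measurable_iff_comap_le.mpr <| le_iSup₂_of_le (f := fun (Λ : Set X) (_ : IsB0 Λ) =>
    MeasurableSpace.comap (fun γ : Config X => (γ.1 ∩ Λ).ncard) ⊤) Λ hΛ le_rfl

theorem measurable_config_of_ncard_inter {α : Type*} [MeasurableSpace α] {f : α → Config X}
    (hf : ∀ Λ : Set X, IsB0 Λ → Measurable fun a => ((f a).1 ∩ Λ).ncard) : Measurable f := by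
  refine measurable_iff_comap_le.mpr ?_
  simp only [instMeasurableSpaceConfig, MeasurableSpace.comap_iSup, MeasurableSpace.comap_comp]
  exact iSup₂_le fun Λ hΛ => measurable_iff_comap_le.mp (hf Λ hΛ)

theorem measurableSet_inter_nonempty {Λ : Set X} (hΛ : IsB0 Λ) :
    MeasurableSet {γ : Config X | (γ.1 ∩ Λ).Nonempty} := by
  simp_rw [← ncard_pos (Config.finite_inter _ hΛ)]
  exact measurableSet_lt measurable_const (measurable_ncard_inter hΛ)

section LocallyCompact

variable [T2Space X] [LocallyCompactSpace X] [SecondCountableTopology X] [OpensMeasurableSpace X]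

theorem measurableSet_mem_config : MeasurableSet {p : X × Config X | p.1 ∈ p.2.1} := by
  let 𝒰 := {U ∈ TopologicalSpace.countableBasis X | IsCompact (closure U)}
  -- a configuration is closed, so it contains `x` iff it meets every small neighbourhood of `x`
  have hmem : {p : X × Config X | p.1 ∈ p.2.1} =
      ⋂ U ∈ 𝒰, (Prod.fst ⁻¹' U)ᶜ ∪ Prod.snd ⁻¹' {γ : Config X | (γ.1 ∩ U).Nonempty} := by
    ext ⟨x, γ⟩
    simp only [mem_ofPred_eq, mem_iInter, mem_union, mem_compl_iff, mem_preimage,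
      or_iff_not_imp_left, not_not]
    refine ⟨fun hx U _ hxU => ⟨x, hx, hxU⟩, fun h => by_contra fun hx => ?_⟩
    obtain ⟨U, hU, hUc, hxU, hUγ⟩ :=
      exists_mem_countableBasis_isCompact_closure γ.isClosed.isOpen_compl hx
    obtain ⟨y, hyγ, hyU⟩ := h U ⟨hU, hUc⟩ hxU
    exact hUγ hyU hyγ
  rw [hmem]
  refine .biInter ((TopologicalSpace.countable_countableBasis X).mono (sep_subset _ _))
    fun U ⟨hU, hUc⟩ => ?_
  have hUo : IsOpen U := TopologicalSpace.isOpen_of_mem_countableBasis hU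
  exact (hUo.measurableSet.preimage measurable_fst).compl.union
    (measurableSet_inter_nonempty ⟨hUo.measurableSet, hUc⟩ |>.preimage measurable_snd)

theorem measurable_erase : Measurable fun p : X × Config X => p.2.erase p.1 := by
  classical
  refine measurable_config_of_ncard_inter fun Λ hΛ => ?_
  have hncard : ∀ p : X × Config X, ((p.2.erase p.1).1 ∩ Λ).ncard =
      if p.1 ∈ p.2.1 ∧ p.1 ∈ Λ then (p.2.1 ∩ Λ).ncard - 1 else (p.2.1 ∩ Λ).ncard := by
    rintro ⟨x, γ⟩
    have hset : (γ.erase x).1 ∩ Λ = (γ.1 ∩ Λ) \ {x} := inter_sdiff_right_comm.symm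
    dsimp only
    split_ifs with h
    · rw [hset, ncard_sdiff_singleton_of_mem (show x ∈ γ.1 ∩ Λ from h)]
    · rw [hset, sdiff_singleton_eq_self (show x ∉ γ.1 ∩ Λ from h)]
  simp only [hncard]
  exact Measurable.ite (measurableSet_mem_config.inter (hΛ.1.preimage measurable_fst))
    ((measurable_ncard_inter hΛ).comp measurable_snd |>.sub_const 1)
    ((measurable_ncard_inter hΛ).comp measurable_snd)

theorem MeckeIdentity.lintegral_tsum_indicator_erase_eq_zero {ν : Measure X}
    [NullSingletonClass ν] {μ : Measure (Config X)} {r : X → Config X → ℝ}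
    (hMecke : MeckeIdentity ν μ r)
    {N : Set (Config X)} (hN : MeasurableSet N) (hμN : μ N = 0) :
    ∫⁻ γ, ∑' x : γ.1, N.indicator 1 (γ.erase x) ∂μ = 0 := by
  rw [hMecke (fun x γ => N.indicator 1 (γ.erase x))
    ((measurable_one.indicator hN).comp measurable_erase)]
  refine lintegral_eq_zero_of_ae_eq_zero ?_
  filter_upwards [measure_eq_zero_iff_ae_notMem.mp hμN] with γ hγN
  -- `ν`-almost every `x` lies outside the countable set `γ`, and then `(γ ∪ {x}) \ {x} = γ ∉ N`
  refine lintegral_eq_zero_of_ae_eq_zero ?_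
  filter_upwards [measure_eq_zero_iff_ae_notMem.mp (γ.countable.measure_zero ν)] with x hx
  simp [Config.ins_erase_of_notMem hx, hγN]

end LocallyCompact

theorem integral_eq_zero_of_one_le_of_ne_zero {α : Type*} [MeasurableSpace α] {μ : Measure α}
    {f : α → ℝ} {g : α → ℝ≥0∞} (hg : ∫⁻ a, g a ∂μ = 0) (hfg : ∀ a, f a ≠ 0 → 1 ≤ g a) :
    ∫ a, f a ∂μ = 0 := by
  by_cases hf : AEStronglyMeasurable f μ
  · have hsupp : μ {a | f a ≠ 0} = 0 := by
      refine le_antisymm ?_ bot_le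
      calc μ {a | f a ≠ 0}
          = ∫⁻ a, {a | f a ≠ 0}.indicator 1 a ∂μ :=
            (lintegral_indicator_one₀ (hf.aemeasurable.nullMeasurable
              (measurableSet_singleton 0).compl)).symm
        _ ≤ ∫⁻ a, g a ∂μ := lintegral_mono (indicator_le hfg)
        _ = 0 := hg
    exact integral_eq_zero_of_ae (ae_iff.mpr hsupp)
  · exact integral_non_aestronglyMeasurable hf

theorem glauber_form_well_defined_general {X : Type*} [TopologicalSpace X]
    [LocallyCompactSpace X] [SecondCountableTopology X] [T2Space X]
    [MeasurableSpace X] [BorelSpace X]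
    (ν : Measure X) [NullSingletonClass ν]
    (μ : Measure (Config X))
    (r : X → Config X → ℝ)
    (hMecke : MeckeIdentity ν μ r)
    (d : X → Config X → ℝ)
    (F G : Config X → ℝ)
    (hF0 : ∀ᵐ γ ∂μ, F γ = 0) :
    glauberE μ d F G = 0 := by
  obtain ⟨N, hFN, hN, hμN⟩ := exists_measurable_superset_of_null (ae_iff.mp hF0)
  refine integral_eq_zero_of_one_le_of_ne_zero
    (g := fun γ => ∑' x : γ.1, N.indicator 1 (γ.erase x) + N.indicator 1 γ) ?_ fun γ hγ => ?_
  · rw [lintegral_add_right _ (measurable_one.indicator hN),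
      hMecke.lintegral_tsum_indicator_erase_eq_zero hN hμN, lintegral_indicator_one hN, hμN,
      add_zero]
  · obtain ⟨x, hx⟩ : ∃ x : γ.1, Dm F x γ ≠ 0 := by
      by_contra! h
      exact hγ (by simp [h])
    by_cases hγN : γ ∈ N
    · simp [hγN]
    have hFγ : F γ = 0 := not_not.mp fun h => hγN (hFN h)
    have hxN : γ.erase x ∈ N := hFN fun h => hx (by simp [Dm, h, hFγ])
    calc (1 : ℝ≥0∞) = N.indicator 1 (γ.erase x) := by simp [hxN]
      _ ≤ ∑' y : γ.1, N.indicator 1 (γ.erase y) := ENNReal.le_tsum x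
      _ ≤ _ := le_self_add

/-- Under the Mecke identity and condition (G1), if `F, G ∈ FC_b` and `F = 0` μ-a.e.,
then `ℰ_G(F,G) = 0`. -/
theorem glauber_form_well_defined {X : Type*} [TopologicalSpace X]
    [LocallyCompactSpace X] [SecondCountableTopology X] [T2Space X]
    [MeasurableSpace X] [BorelSpace X]
    (ν : Measure X) [ν.Regular] [NullSingletonClass ν]
    (μ : Measure (Config X)) [IsProbabilityMeasure μ]
    (r : X → Config X → ℝ) (hr0 : ∀ x γ, 0 ≤ r x γ)
    (hrm : Measurable fun p : X × Config X => r p.1 p.2)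
    (hMecke : MeckeIdentity ν μ r)
    (d : X → Config X → ℝ) (hd0 : ∀ x γ, 0 ≤ d x γ)
    (hdm : Measurable fun p : X × Config X => d p.1 p.2)
    (hG1 : CondG1 μ d)
    (F G : Config X → ℝ) (hF : IsCylinder F) (hG : IsCylinder G)
    (hF0 : ∀ᵐ γ ∂μ, F γ = 0) :
    glauberE μ d F G = 0 :=
  glauber_form_well_defined_general ν μ r hMecke d F G hF0

end
end

section
/- (Proposition 3.3, square-integrability condition with u = −s.) Assume the Mecke identity with Papangelou intensity r, and assume: a : X×X → [0,∞) is measurable, symmetric (a(x,y) = a(y,x)), bounded, with sup_{x∈X} ∫_X a(x,y) ν(dy) < ∞; j : X → [0,∞) is measurable with r(x,γ) ≤ j(x) for all x ∈ X and γ ∈ Γ, with ∫_Λ j dν < ∞ for every Λ ∈ B₀(X), and sup_{x ∈ X\Λ₀} j(x) < ∞ for some Λ₀ ∈ B₀(X). For s ∈ [0,1] define c_s(x,y,γ) := a(x,y)·r(x,γ)^{s−1}·r(y,γ)^{s}·𝟙{r(x,γ)>0 and r(y,γ)>0}. Then for every s ∈ [0,1] and every Λ ∈ B₀(X), the function γ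 ↦ ∫_Λ ∑_{y∈γ∩Λ} r(x,γ\{y})·r(y,γ\{y})^{−s}·𝟙{r(y,γ\{y})>0}·c_s(x,y,γ\{y}) ν(dx) is square-integrable with respect to μ. -/
open MeasureTheory Set ENNReal Filter Topology

noncomputable section

variable {X : Type*} [TopologicalSpace X]

variable [MeasurableSpace X]

/-!
Where both intensities are positive, `r(x)·r(y)^{-s}·c_s(x,y) = a(x,y)·r(x)^s ≤ M·(1 + j(x))`, so
the inner integral is at most `N_Λ(γ)·∫_Λ M·(1 + j) dν` with `N_Λ(γ) = |γ ∩ Λ|`. It remains to bound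
the second moment of `N_Λ`, and the Mecke identity applied to `H(x,γ) = 𝟙_Λ(x)·N_Λ(γ)` gives
`E[N_Λ²] = E ∫_Λ r(x,γ)·N_Λ(γ ∪ {x}) ν(dx) ≤ ∫_Λ j dν · (E[N_Λ] + 1)`.
-/

theorem IsB0.measure_lt_top {ν : Measure X} [IsFiniteMeasureOnCompacts ν] {Λ : Set X}
    (hΛ : IsB0 Λ) : ν Λ < ⊤ :=
  (measure_mono subset_closure).trans_lt hΛ.2.measure_lt_top

namespace Config

theorem finite_inter_of_isB0 {Λ : Set X} (hΛ : IsB0 Λ) (γ : Config X) : (γ.1 ∩ Λ).Finite :=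
  (γ.2 _ hΛ.2).subset (Set.inter_subset_inter_right _ subset_closure)

theorem encard_inter_ne_top {Λ : Set X} (hΛ : IsB0 Λ) (γ : Config X) :
    ((γ.1 ∩ Λ).encard : ℝ≥0∞) ≠ ⊤ :=
  ENat.toENNReal_ne_top.mpr (finite_inter_of_isB0 hΛ γ).encard_lt_top.ne

theorem encard_ins_inter_le {X : Type*} [TopologicalSpace X] (γ : Config X) (x : X)
    (Λ : Set X) :
    (((γ.ins x).1 ∩ Λ).encard : ℝ≥0∞) ≤ (γ.1 ∩ Λ).encard + 1 := by
  have hsub : (γ.ins x).1 ∩ Λ ⊆ insert x (γ.1 ∩ Λ) := by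
    rintro z ⟨rfl | hz, hzΛ⟩
    exacts [Set.mem_insert _ _, Set.mem_insert_of_mem _ ⟨hz, hzΛ⟩]
  exact_mod_cast (Set.encard_le_encard hsub).trans (Set.encard_insert_le _ x)

theorem measurable_encard_inter {Λ : Set X} (hΛ : IsB0 Λ) :
    Measurable fun γ : Config X => ((γ.1 ∩ Λ).encard : ℝ≥0∞) := by
  have hncard : Measurable fun γ : Config X => (γ.1 ∩ Λ).ncard :=
    Measurable.of_comap_le <| le_iSup₂ (f := fun (Λ : Set X) (_ : IsB0 Λ) =>
      MeasurableSpace.comap (fun γ : Config X => (γ.1 ∩ Λ).ncard) ⊤) Λ hΛ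
  have heq : (fun γ : Config X => ((γ.1 ∩ Λ).encard : ℝ≥0∞)) =
      fun γ => ((γ.1 ∩ Λ).ncard : ℝ≥0∞) := by
    funext γ
    rw [← (finite_inter_of_isB0 hΛ γ).cast_ncard_eq]
    rfl
  rw [heq]
  exact measurable_from_top.comp hncard

theorem tsum_indicator_one {X : Type*} [TopologicalSpace X] (γ : Config X) (Λ : Set X) :
    ∑' x : γ.1, Λ.indicator (1 : X → ℝ≥0∞) x = (γ.1 ∩ Λ).encard := by
  rw [tsum_subtype γ.1 (Λ.indicator 1), Set.indicator_indicator, ← tsum_subtype]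
  exact ENNReal.tsum_set_one _

end Config

namespace MeckeIdentity

variable {ν : Measure X} {μ : Measure (Config X)} {r : X → Config X → ℝ}

theorem lintegral_encard_mul (hMecke : MeckeIdentity ν μ r) {Λ : Set X} (hΛ : MeasurableSet Λ)
    {G : Config X → ℝ≥0∞} (hG : Measurable G) :
    ∫⁻ γ, (γ.1 ∩ Λ).encard * G γ ∂μ =
      ∫⁻ γ, ∫⁻ x in Λ, ENNReal.ofReal (r x γ) * G (γ.ins x) ∂ν ∂μ := by
  have hH : Measurable fun p : X × Config X => Λ.indicator (1 : X → ℝ≥0∞) p.1 * G p.2 :=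
    ((measurable_one.indicator hΛ).comp measurable_fst).mul (hG.comp measurable_snd)
  calc ∫⁻ γ, (γ.1 ∩ Λ).encard * G γ ∂μ
      = ∫⁻ γ, ∑' x : γ.1, Λ.indicator 1 (x : X) * G γ ∂μ := lintegral_congr fun γ => by
        rw [ENNReal.tsum_mul_right, Config.tsum_indicator_one]
    _ = ∫⁻ γ, ∫⁻ x, ENNReal.ofReal (r x γ) * (Λ.indicator 1 x * G (γ.ins x)) ∂ν ∂μ :=
        hMecke (fun x γ => Λ.indicator 1 x * G γ) hH
    _ = _ := lintegral_congr fun γ => by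
        rw [← lintegral_indicator hΛ]
        congr 1 with x
        by_cases hx : x ∈ Λ <;> simp [hx]

theorem lintegral_encard_sq_lt_top [IsFiniteMeasure μ] (hMecke : MeckeIdentity ν μ r)
    {j : X → ℝ} (hrj : ∀ x γ, r x γ ≤ j x) {Λ : Set X} (hΛ : IsB0 Λ)
    (hj : ∫⁻ x in Λ, ENNReal.ofReal (j x) ∂ν < ⊤) :
    ∫⁻ γ, ((γ.1 ∩ Λ).encard : ℝ≥0∞) ^ 2 ∂μ < ⊤ := by
  set N : Config X → ℝ≥0∞ := fun γ => (γ.1 ∩ Λ).encard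
  set J := ∫⁻ x in Λ, ENNReal.ofReal (j x) ∂ν
  have hN := Config.measurable_encard_inter hΛ
  have hmecke_le : ∀ G : Config X → ℝ≥0∞, Measurable G →
      ∫⁻ γ, N γ * G γ ∂μ ≤ ∫⁻ γ, ∫⁻ x in Λ, ENNReal.ofReal (j x) * G (γ.ins x) ∂ν ∂μ :=
    fun G hG => (hMecke.lintegral_encard_mul hΛ.1 hG).trans_le <|
      lintegral_mono fun γ => lintegral_mono fun x => by
        gcongr
        exact hrj x γ
  have hfirst : ∫⁻ γ, N γ ∂μ < ⊤ := by
    refine lt_of_le_of_lt ?_ (ENNReal.mul_lt_top hj (measure_lt_top μ Set.univ))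
    simpa using hmecke_le 1 measurable_one
  have hsecond : ∫⁻ γ, N γ ^ 2 ∂μ ≤ J * (∫⁻ γ, N γ ∂μ + μ Set.univ) :=
    calc ∫⁻ γ, N γ ^ 2 ∂μ
        ≤ ∫⁻ γ, ∫⁻ x in Λ, ENNReal.ofReal (j x) * N (γ.ins x) ∂ν ∂μ := by
          simpa only [sq] using hmecke_le N hN
      _ ≤ ∫⁻ γ, ∫⁻ x in Λ, ENNReal.ofReal (j x) * (N γ + 1) ∂ν ∂μ :=
          lintegral_mono fun γ => lintegral_mono fun x => by
            gcongr
            exact Config.encard_ins_inter_le γ x Λ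
      _ = ∫⁻ γ, J * (N γ + 1) ∂μ := by
          congr 1 with γ
          exact lintegral_mul_const' _ _
            (ENNReal.add_ne_top.mpr ⟨Config.encard_inter_ne_top hΛ γ, ENNReal.one_ne_top⟩)
      _ = J * (∫⁻ γ, N γ ∂μ + μ Set.univ) := by
          rw [lintegral_const_mul' _ _ hj.ne, lintegral_add_right _ measurable_const,
            lintegral_one]
  exact hsecond.trans_lt
    (ENNReal.mul_lt_top hj (ENNReal.add_lt_top.mpr ⟨hfirst, measure_lt_top _ _⟩))

end MeckeIdentity

theorem rpow_le_one_add_of_le {t u s : ℝ} (ht : 0 ≤ t) (htu : t ≤ u)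
    (hs : s ∈ Set.Icc (0 : ℝ) 1) : t ^ s ≤ 1 + u := by
  rcases le_total t 1 with ht1 | ht1
  · linarith [Real.rpow_le_one ht ht1 hs.1]
  · linarith [Real.rpow_le_self_of_one_le ht1 hs.2]

theorem ofReal_rate_term_le {X : Type*} [TopologicalSpace X] {r : X → Config X → ℝ}
    {a : X → X → ℝ} {j : X → ℝ} {c : X → X → Config X → ℝ} {s M : ℝ} (hs : s ∈ Set.Icc (0 : ℝ) 1)
    (hM : ∀ x y, a x y ≤ M) (hrj : ∀ x γ, r x γ ≤ j x)
    (hc : ∀ x y γ, c x y γ =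
      if 0 < r x γ ∧ 0 < r y γ then a x y * r x γ ^ (s - 1) * r y γ ^ s else 0)
    (x y : X) (γ : Config X) :
    ENNReal.ofReal (if 0 < r y γ then r x γ * r y γ ^ (-s) * c x y γ else 0) ≤
      ENNReal.ofReal M * (1 + ENNReal.ofReal (j x)) := by
  by_cases hpos : 0 < r x γ ∧ 0 < r y γ
  · obtain ⟨hx, hy⟩ := hpos
    have hval : r x γ * r y γ ^ (-s) * c x y γ = a x y * r x γ ^ s := by
      rw [hc, if_pos ⟨hx, hy⟩, Real.rpow_sub_one hx.ne', Real.rpow_neg hy.le]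
      field_simp
    have hrs : 0 ≤ r x γ ^ s := Real.rpow_nonneg hx.le s
    rw [if_pos hy, hval]
    calc ENNReal.ofReal (a x y * r x γ ^ s)
        ≤ ENNReal.ofReal (M * r x γ ^ s) :=
          ENNReal.ofReal_le_ofReal (mul_le_mul_of_nonneg_right (hM x y) hrs)
      _ = ENNReal.ofReal M * ENNReal.ofReal (r x γ ^ s) := ENNReal.ofReal_mul' hrs
      _ ≤ ENNReal.ofReal M * (1 + ENNReal.ofReal (j x)) := by
          gcongr
          refine (ENNReal.ofReal_le_ofReal (rpow_le_one_add_of_le hx.le (hrj x γ) hs)).trans ?_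
          simpa using ENNReal.ofReal_add_le (p := 1) (q := j x)
  · have hzero : (if 0 < r y γ then r x γ * r y γ ^ (-s) * c x y γ else 0) = 0 := by
      split_ifs with hy
      · rw [hc, if_neg hpos, mul_zero]
      · rfl
    simp [hzero]

theorem example_rate_cond2_general {X : Type*} [TopologicalSpace X]
    [MeasurableSpace X]
    (ν : Measure X) [ν.Regular]
    (μ : Measure (Config X)) [IsProbabilityMeasure μ]
    (r : X → Config X → ℝ)
    (hMecke : MeckeIdentity ν μ r)
    (a : X → X → ℝ)
    (habdd : ∃ M : ℝ, ∀ x y, a x y ≤ M)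
    (j : X → ℝ)
    (hrj : ∀ x γ, r x γ ≤ j x)
    (hjint : ∀ Λ : Set X, IsB0 Λ → ∫⁻ x in Λ, ENNReal.ofReal (j x) ∂ν < ⊤)
    (s : ℝ) (hs : s ∈ Set.Icc (0 : ℝ) 1)
    (c : X → X → Config X → ℝ)
    (hc : ∀ x y γ, c x y γ =
      if 0 < r x γ ∧ 0 < r y γ then a x y * r x γ ^ (s - 1) * r y γ ^ s else 0) :
    ∀ Λ : Set X, IsB0 Λ →
      ∫⁻ γ, (∫⁻ x in Λ, ∑' y : ↥(γ.1 ∩ Λ),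
          ENNReal.ofReal (if 0 < r (y : X) (γ.erase (y : X)) then
            r x (γ.erase (y : X)) * r (y : X) (γ.erase (y : X)) ^ (-s) *
              c x (y : X) (γ.erase (y : X)) else 0) ∂ν) ^ 2 ∂μ < ⊤ := by
  intro Λ hΛ
  obtain ⟨M, hM⟩ := habdd
  set C := ∫⁻ x in Λ, ENNReal.ofReal M * (1 + ENNReal.ofReal (j x)) ∂ν with hC_def
  have hC : C < ⊤ := by
    rw [hC_def, lintegral_const_mul' _ _ ENNReal.ofReal_ne_top,
      lintegral_add_left measurable_const]
    simpa using ENNReal.mul_lt_top ENNReal.ofReal_lt_top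
      (ENNReal.add_lt_top.mpr ⟨hΛ.measure_lt_top, hjint Λ hΛ⟩)
  calc _ ≤ ∫⁻ γ, (((γ.1 ∩ Λ).encard : ℝ≥0∞) * C) ^ 2 ∂μ := lintegral_mono fun γ => by
        gcongr
        calc _ ≤ ∫⁻ x in Λ, ∑' _ : ↥(γ.1 ∩ Λ), ENNReal.ofReal M * (1 + ENNReal.ofReal (j x)) ∂ν :=
              lintegral_mono fun x => ENNReal.tsum_le_tsum fun y =>
                ofReal_rate_term_le hs hM hrj hc x y _
          _ = (γ.1 ∩ Λ).encard * C := by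
              simp_rw [ENNReal.tsum_set_const]
              exact lintegral_const_mul' _ _ (Config.encard_inter_ne_top hΛ γ)
    _ = (∫⁻ γ, ((γ.1 ∩ Λ).encard : ℝ≥0∞) ^ 2 ∂μ) * C ^ 2 := by
        simp_rw [mul_pow]
        exact lintegral_mul_const' _ _ (ENNReal.pow_ne_top hC.ne)
    _ < ⊤ := ENNReal.mul_lt_top (hMecke.lintegral_encard_sq_lt_top hrj hΛ (hjint Λ hΛ))
        (ENNReal.pow_lt_top hC)

/-- Proposition 3.3, square-integrability condition (2.2) with `u = −s`: for the rate
`c_s(x,y,γ) = a(x,y)·r(x,γ)^{s−1}·r(y,γ)^{s}·𝟙{r(x,γ)>0 ∧ r(y,γ)>0}`, `s ∈ [0,1]`,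
the function `γ ↦ ∫_Λ ∑_{y∈γ∩Λ} r(x,γ\{y})·r(y,γ\{y})^{−s}·𝟙{r(y,γ\{y})>0}·c_s(x,y,γ\{y}) ν(dx)`
is square-integrable with respect to `μ` for every `Λ ∈ B₀(X)`. -/
theorem example_rate_cond2 {X : Type*} [TopologicalSpace X]
    [LocallyCompactSpace X] [SecondCountableTopology X] [T2Space X]
    [MeasurableSpace X] [BorelSpace X]
    (ν : Measure X) [ν.Regular] [NullSingletonClass ν]
    (μ : Measure (Config X)) [IsProbabilityMeasure μ]
    (r : X → Config X → ℝ) (hr0 : ∀ x γ, 0 ≤ r x γ)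
    (hrm : Measurable fun p : X × Config X => r p.1 p.2)
    (hMecke : MeckeIdentity ν μ r)
    (a : X → X → ℝ) (ha0 : ∀ x y, 0 ≤ a x y) (hasym : ∀ x y, a x y = a y x)
    (ham : Measurable fun p : X × X => a p.1 p.2)
    (habdd : ∃ M : ℝ, ∀ x y, a x y ≤ M)
    (haint : ⨆ x, ∫⁻ y, ENNReal.ofReal (a x y) ∂ν < ⊤)
    (j : X → ℝ) (hj0 : ∀ x, 0 ≤ j x) (hjm : Measurable j)
    (hrj : ∀ x γ, r x γ ≤ j x)
    (hjint : ∀ Λ : Set X, IsB0 Λ → ∫⁻ x in Λ, ENNReal.ofReal (j x) ∂ν < ⊤)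
    (hjbdd : ∃ Λ₀ : Set X, IsB0 Λ₀ ∧ ∃ M : ℝ, ∀ x ∉ Λ₀, j x ≤ M)
    (s : ℝ) (hs : s ∈ Set.Icc (0 : ℝ) 1)
    (c : X → X → Config X → ℝ)
    (hc : ∀ x y γ, c x y γ =
      if 0 < r x γ ∧ 0 < r y γ then a x y * r x γ ^ (s - 1) * r y γ ^ s else 0) :
    ∀ Λ : Set X, IsB0 Λ →
      ∫⁻ γ, (∫⁻ x in Λ, ∑' y : ↥(γ.1 ∩ Λ),
          ENNReal.ofReal (if 0 < r (y : X) (γ.erase (y : X)) then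
            r x (γ.erase (y : X)) * r (y : X) (γ.erase (y : X)) ^ (-s) *
              c x (y : X) (γ.erase (y : X)) else 0) ∂ν) ^ 2 ∂μ < ⊤ :=
  example_rate_cond2_general ν μ r hMecke a habdd j hrj hjint s hs c hc
end
end

section
/- (Proposition 3.3, case s = 1.) Assume the Mecke identity with Papangelou intensity r, and assume: a : X×X → [0,∞) is measurable, symmetric (a(x,y) = a(y,x)), bounded, with sup_{x∈X} ∫_X a(x,y) ν(dy) < ∞; j : X → [0,∞) is measurable with r(x,γ) ≤ j(x) for all x ∈ X and γ ∈ Γ, with ∫_Λ j dν < ∞ for every Λ ∈ B₀(X), and sup_{x ∈ X\Λ₀} j(x) < ∞ for some Λ₀ ∈ B₀(X). Define c₁(x,y,γ) := a(x,y)·r(y,γ)·𝟙{r(x,γ)>0 and r(y,γ)>0}. Then for every Λ ∈ B₀(X) the function γ ↦ ∑_{x∈γ} ∫_X c₁(x,y,γ\{x})·(χ_Λ(x)+χ_Λ(y)) ν(dy) is square-integrable with respect to μ. -/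
open MeasureTheory Set ENNReal Filter Topology

noncomputable section

variable {X : Type*} [TopologicalSpace X]

variable [MeasurableSpace X]

/-! Since `c₁(x,y,γ) ≤ a(x,y) j(y)`, the function is dominated by the linear statistic
`T(γ) = ∑_{x∈γ} φ(x)` with `φ(x) = ∫ a(x,y) j(y) (χ_Λ(x) + χ_Λ(y)) ν(dy)`.
Splitting at `Λ₀` (on `Λ₀`, `a` is bounded and `j` integrable; off `Λ₀`, `j` is bounded and
`∫ a(x,·) dν` is bounded in `x`) bounds `∫ a(x,y) j(y) ν(dy)` uniformly in `x`, so `φ` is bounded; the same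
splitting, Tonelli and the symmetry of `a` give `∫ j φ dν < ∞`. Finally the Mecke identity,
applied to `T(γ)² = ∑_{x∈γ} φ(x) T(γ)` together with `T(γ ∪ {x}) ≤ φ(x) + T(γ)`, yields
`∫ T² dμ ≤ ∫ j φ² dν + (∫ j φ dν)²`. -/

namespace Config

def toMeasure (γ : Config X) : Measure X := Measure.sum fun x : γ.1 => Measure.dirac (x : X)

theorem measurable_ncard_inter {Λ : Set X} (hΛ : IsB0 Λ) :
    Measurable fun γ : Config X => (γ.1 ∩ Λ).ncard :=
  measurable_iff_comap_le.2 <| le_iSup₂ (f := fun Λ (_ : IsB0 Λ) =>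
    MeasurableSpace.comap (fun γ : Config X => (γ.1 ∩ Λ).ncard) ⊤) Λ hΛ

theorem toMeasure_apply (γ : Config X) {s : Set X} (hs : MeasurableSet s) :
    γ.toMeasure s = (γ.1 ∩ s).encard := by
  simp only [toMeasure, Measure.sum_apply _ hs, Measure.dirac_apply' _ hs]
  rw [← ENNReal.tsum_set_one, tsum_subtype γ.1 (s.indicator 1), Set.indicator_indicator]
  exact (tsum_subtype (γ.1 ∩ s) 1).symm

theorem lintegral_toMeasure (γ : Config X) {f : X → ℝ≥0∞} (hf : Measurable f) :
    ∫⁻ x, f x ∂γ.toMeasure = ∑' x : γ.1, f x := by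
  simp_rw [toMeasure, lintegral_sum_measure, lintegral_dirac' _ hf]

theorem measurable_toMeasure_apply_of_isB0 {Λ : Set X} (hΛ : IsB0 Λ) :
    Measurable fun γ : Config X => γ.toMeasure Λ := by
  have hfin : ∀ γ : Config X, (γ.1 ∩ Λ).Finite := fun γ =>
    (γ.2 _ hΛ.2).subset (inter_subset_inter_right _ subset_closure)
  have hcount : (fun γ : Config X => γ.toMeasure Λ) = fun γ => ((γ.1 ∩ Λ).ncard : ℝ≥0∞) :=
    funext fun γ => by rw [toMeasure_apply _ hΛ.1, ← (hfin γ).cast_ncard_eq, ENat.toENNReal_coe]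
  rw [hcount]
  exact measurable_from_top.comp (measurable_ncard_inter hΛ)

section

variable [T2Space X] [SigmaCompactSpace X] [OpensMeasurableSpace X]

theorem measurable_toMeasure : Measurable (toMeasure : Config X → Measure X) := by
  refine Measure.measurable_of_measurable_coe _ fun s hs => ?_
  have hK := isCompact_compactCovering X
  have hmono : Monotone fun n => s ∩ compactCovering X n := fun m n hmn =>
    inter_subset_inter_right _ (compactCovering_subset X hmn)
  have hsup : ∀ γ : Config X, γ.toMeasure s = ⨆ n, γ.toMeasure (s ∩ compactCovering X n) :=
    fun γ => by rw [← hmono.measure_iUnion, ← inter_iUnion, iUnion_compactCovering, inter_univ]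
  simp_rw [hsup]
  exact .iSup fun n => measurable_toMeasure_apply_of_isB0
    ⟨hs.inter (hK n).isClosed.measurableSet,
      (hK n).of_isClosed_subset isClosed_closure
        (closure_minimal inter_subset_right (hK n).isClosed)⟩

theorem measurable_tsum {f : X → ℝ≥0∞} (hf : Measurable f) :
    Measurable fun γ : Config X => ∑' x : γ.1, f x := by
  simp_rw [← lintegral_toMeasure _ hf]
  exact (Measure.measurable_lintegral hf).comp measurable_toMeasure

end

end Config

theorem ENNReal.tsum_insert_le {α : Type*} (f : α → ℝ≥0∞) (s : Set α) (x : α) :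
    ∑' z : ↑(insert x s), f z ≤ f x + ∑' z : s, f z :=
  (ENNReal.tsum_union_le f {x} s).trans_eq (by rw [tsum_singleton])

section LIntegral

variable {α : Type*} [MeasurableSpace α] {ν : Measure α}

theorem lintegral_mul_le_of_le_of_le_compl {f g : α → ℝ≥0∞} (hf : Measurable f)
    (hg : Measurable g) {s : Set α} (hs : MeasurableSet s) {M N : ℝ≥0∞}
    (hfM : ∀ x, f x ≤ M) (hgN : ∀ x ∉ s, g x ≤ N) :
    ∫⁻ x, f x * g x ∂ν ≤ M * ∫⁻ x in s, g x ∂ν + N * ∫⁻ x, f x ∂ν := by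
  rw [← lintegral_add_compl _ hs]
  gcongr ?_ + ?_
  · calc ∫⁻ x in s, f x * g x ∂ν ≤ ∫⁻ x in s, M * g x ∂ν := by gcongr with x; exact hfM x
      _ = M * ∫⁻ x in s, g x ∂ν := lintegral_const_mul _ hg
  · calc ∫⁻ x in sᶜ, f x * g x ∂ν ≤ ∫⁻ x in sᶜ, N * f x ∂ν :=
          setLIntegral_mono' hs.compl fun x hx => by rw [mul_comm]; gcongr; exact hgN x hx
      _ = N * ∫⁻ x in sᶜ, f x ∂ν := lintegral_const_mul _ hf
      _ ≤ N * ∫⁻ x, f x ∂ν := by gcongr; exact Measure.restrict_le_self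

theorem lintegral_lintegral_mul_le [SFinite ν] {A : α → α → ℝ≥0∞} {g : α → ℝ≥0∞}
    (hA : Measurable (Function.uncurry A)) (hg : Measurable g) {S : ℝ≥0∞}
    (hS : ∀ y, ∫⁻ x, A x y ∂ν ≤ S) :
    ∫⁻ x, ∫⁻ y, A x y * g y ∂ν ∂ν ≤ S * ∫⁻ y, g y ∂ν := by
  rw [lintegral_lintegral_swap (hA.mul (hg.comp measurable_snd)).aemeasurable]
  calc ∫⁻ y, ∫⁻ x, A x y * g y ∂ν ∂ν = ∫⁻ y, (∫⁻ x, A x y ∂ν) * g y ∂ν :=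
        lintegral_congr fun y =>
          lintegral_mul_const _ (hA.comp (measurable_id.prodMk measurable_const))
    _ ≤ ∫⁻ y, S * g y ∂ν := by gcongr with y; exact hS y
    _ = S * ∫⁻ y, g y ∂ν := lintegral_const_mul _ hg

theorem lintegral_mul_indicator_add_indicator_le (f : α → ℝ≥0∞) (s : Set α) (x : α) :
    ∫⁻ y, f y * (s.indicator 1 x + s.indicator 1 y) ∂ν ≤ 2 * ∫⁻ y, f y ∂ν := by
  have hχ : ∀ z, s.indicator (1 : α → ℝ≥0∞) z ≤ 1 := fun z =>
    Set.indicator_le_self' (fun _ _ => zero_le) z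
  calc ∫⁻ y, f y * (s.indicator 1 x + s.indicator 1 y) ∂ν ≤ ∫⁻ y, f y * 2 ∂ν := by
        gcongr with y
        exact (add_le_add (hχ x) (hχ y)).trans_eq one_add_one_eq_two
    _ = 2 * ∫⁻ y, f y ∂ν := by rw [lintegral_mul_const' _ _ ENNReal.ofNat_ne_top, mul_comm]

theorem lintegral_mul_lintegral_indicator_add_le [SFinite ν] {A : α → α → ℝ≥0∞}
    {J : α → ℝ≥0∞} (hA : Measurable (Function.uncurry A)) (hJ : Measurable J) {Λ Λ₀ : Set α}
    (hΛ : MeasurableSet Λ) (hΛ₀ : MeasurableSet Λ₀) {B S N : ℝ≥0∞}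
    (hrow : ∀ x, ∫⁻ y, A x y * J y ∂ν ≤ B) (hcol : ∀ y, ∫⁻ x, A x y ∂ν ≤ S)
    (hJN : ∀ x ∉ Λ₀, J x ≤ N) :
    ∫⁻ x, J x * ∫⁻ y, A x y * J y * (Λ.indicator 1 x + Λ.indicator 1 y) ∂ν ∂ν ≤
      B * ∫⁻ x in Λ, J x ∂ν + (B * ∫⁻ x in Λ₀, J x ∂ν + N * (S * ∫⁻ x in Λ, J x ∂ν)) := by
  set G : α → ℝ≥0∞ := fun x => ∫⁻ y, A x y * Λ.indicator J y ∂ν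
  have hAx : ∀ x, Measurable (A x) := fun x => hA.comp measurable_prodMk_left
  have hG : Measurable G := (hA.mul ((hJ.indicator hΛ).comp measurable_snd)).lintegral_prod_right'
  have hGB : ∀ x, G x ≤ B := fun x =>
    (lintegral_mono fun y => by gcongr; exact Set.indicator_le_self' (fun _ _ => zero_le) y).trans
      (hrow x)
  have hsplit : ∀ x, J x * ∫⁻ y, A x y * J y * (Λ.indicator 1 x + Λ.indicator 1 y) ∂ν =
      Λ.indicator J x * ∫⁻ y, A x y * J y ∂ν + G x * J x := by
    intro x
    have hAJ : Measurable fun y => A x y * J y := (hAx x).mul hJ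
    have hint : ∀ y, A x y * J y * (Λ.indicator 1 x + Λ.indicator 1 y) =
        A x y * J y * Λ.indicator 1 x + A x y * Λ.indicator J y := fun y => by
      by_cases hy : y ∈ Λ <;> simp [hy, mul_add]
    rw [lintegral_congr hint, lintegral_add_left (hAJ.mul_const _), lintegral_mul_const _ hAJ]
    by_cases hx : x ∈ Λ <;> simp [hx, G, mul_add, mul_comm]
  calc ∫⁻ x, J x * ∫⁻ y, A x y * J y * (Λ.indicator 1 x + Λ.indicator 1 y) ∂ν ∂ν
      = ∫⁻ x, Λ.indicator J x * ∫⁻ y, A x y * J y ∂ν ∂ν + ∫⁻ x, G x * J x ∂ν := by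
        rw [lintegral_congr hsplit, lintegral_add_right (g := fun x => G x * J x) _ (hG.mul hJ)]
    _ ≤ ∫⁻ x, Λ.indicator J x * B ∂ν + (B * ∫⁻ x in Λ₀, J x ∂ν + N * ∫⁻ x, G x ∂ν) := by
        gcongr ?_ + ?_
        · exact lintegral_mono fun x => by gcongr; exact hrow x
        · exact lintegral_mul_le_of_le_of_le_compl hG hJ hΛ₀ hGB hJN
    _ ≤ B * ∫⁻ x in Λ, J x ∂ν + (B * ∫⁻ x in Λ₀, J x ∂ν + N * (S * ∫⁻ x in Λ, J x ∂ν)) := by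
        rw [lintegral_mul_const _ (hJ.indicator hΛ), lintegral_indicator hΛ, mul_comm]
        gcongr
        rw [← lintegral_indicator hΛ]
        exact lintegral_lintegral_mul_le hA (hJ.indicator hΛ) hcol

end LIntegral

namespace MeckeIdentity

variable {ν : Measure X} {μ : Measure (Config X)} {r : X → Config X → ℝ} {j : X → ℝ}

theorem lintegral_tsum_le (hM : MeckeIdentity ν μ r) (hrj : ∀ x γ, r x γ ≤ j x)
    {H : X → Config X → ℝ≥0∞} (hH : Measurable fun p : X × Config X => H p.1 p.2) :
    ∫⁻ γ, ∑' x : γ.1, H x γ ∂μ ≤ ∫⁻ γ, ∫⁻ x, ENNReal.ofReal (j x) * H x (γ.ins x) ∂ν ∂μ :=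
  (hM H hH).trans_le <| lintegral_mono fun γ => lintegral_mono fun x => by
    gcongr; exact hrj x γ

variable [IsProbabilityMeasure μ]

theorem lintegral_tsum_le_lintegral (hM : MeckeIdentity ν μ r) (hrj : ∀ x γ, r x γ ≤ j x)
    {φ : X → ℝ≥0∞} (hφ : Measurable φ) :
    ∫⁻ γ, ∑' x : γ.1, φ x ∂μ ≤ ∫⁻ x, ENNReal.ofReal (j x) * φ x ∂ν :=
  (hM.lintegral_tsum_le hrj (H := fun x _ => φ x) (hφ.comp measurable_fst)).trans_eq
    (by rw [lintegral_const, measure_univ, mul_one])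

variable [T2Space X] [SigmaCompactSpace X] [OpensMeasurableSpace X]

theorem lintegral_tsum_sq_le (hM : MeckeIdentity ν μ r) (hrj : ∀ x γ, r x γ ≤ j x)
    (hj : Measurable j) {φ : X → ℝ≥0∞} (hφ : Measurable φ) :
    ∫⁻ γ, (∑' x : γ.1, φ x) ^ 2 ∂μ ≤
      ∫⁻ x, ENNReal.ofReal (j x) * φ x ^ 2 ∂ν + (∫⁻ x, ENNReal.ofReal (j x) * φ x ∂ν) ^ 2 := by
  set T := fun γ : Config X => ∑' x : γ.1, φ x
  have hT : Measurable T := Config.measurable_tsum hφ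
  have hjφ : Measurable fun x => ENNReal.ofReal (j x) * φ x := hj.ennreal_ofReal.mul hφ
  calc ∫⁻ γ, T γ ^ 2 ∂μ = ∫⁻ γ, ∑' x : γ.1, φ x * T γ ∂μ := by
        simp_rw [sq, ENNReal.tsum_mul_right]; rfl
    _ ≤ ∫⁻ γ, ∫⁻ x, ENNReal.ofReal (j x) * (φ x * T (γ.ins x)) ∂ν ∂μ :=
        hM.lintegral_tsum_le hrj (H := fun x γ => φ x * T γ)
          ((hφ.comp measurable_fst).mul (hT.comp measurable_snd))
    _ ≤ ∫⁻ γ, ∫⁻ x, ENNReal.ofReal (j x) * φ x ^ 2 + ENNReal.ofReal (j x) * φ x * T γ ∂ν ∂μ := by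
        gcongr with γ x
        calc ENNReal.ofReal (j x) * (φ x * T (γ.ins x))
            ≤ ENNReal.ofReal (j x) * (φ x * (φ x + T γ)) := by
              gcongr; exact ENNReal.tsum_insert_le φ γ.1 x
          _ = _ := by ring
    _ = ∫⁻ x, ENNReal.ofReal (j x) * φ x ^ 2 ∂ν +
          (∫⁻ x, ENNReal.ofReal (j x) * φ x ∂ν) * ∫⁻ γ, T γ ∂μ := by
        simp_rw [lintegral_add_right _ (hjφ.mul_const _), lintegral_mul_const _ hjφ]
        rw [lintegral_add_left measurable_const, lintegral_const, measure_univ, mul_one,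
          lintegral_const_mul _ hT]
    _ ≤ _ := by rw [sq (∫⁻ _, _ ∂ν)]; gcongr; exact hM.lintegral_tsum_le_lintegral hrj hφ

theorem lintegral_tsum_sq_lt_top (hM : MeckeIdentity ν μ r) (hrj : ∀ x γ, r x γ ≤ j x)
    (hj : Measurable j) {φ : X → ℝ≥0∞} (hφ : Measurable φ) {C : ℝ≥0∞} (hC : C ≠ ⊤)
    (hφC : ∀ x, φ x ≤ C) (hjφ : ∫⁻ x, ENNReal.ofReal (j x) * φ x ∂ν < ⊤) :
    ∫⁻ γ, (∑' x : γ.1, φ x) ^ 2 ∂μ < ⊤ := by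
  refine (hM.lintegral_tsum_sq_le hrj hj hφ).trans_lt
    (ENNReal.add_lt_top.2 ⟨?_, ENNReal.pow_lt_top hjφ⟩)
  calc ∫⁻ x, ENNReal.ofReal (j x) * φ x ^ 2 ∂ν
      ≤ ∫⁻ x, ENNReal.ofReal (j x) * φ x * C ∂ν := lintegral_mono fun x => by
        rw [sq, ← mul_assoc]
        gcongr
        exact hφC x
    _ = (∫⁻ x, ENNReal.ofReal (j x) * φ x ∂ν) * C := lintegral_mul_const' _ _ hC
    _ < ⊤ := ENNReal.mul_lt_top hjφ hC.lt_top

end MeckeIdentity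

theorem ofReal_ite_mul_le {p : Prop} [Decidable p] {a r j : ℝ} (ha : 0 ≤ a) (hrj : r ≤ j) :
    ENNReal.ofReal (if p then a * r else 0) ≤ ENNReal.ofReal a * ENNReal.ofReal j := by
  split_ifs
  · rw [ofReal_mul ha]; gcongr
  · simp

theorem example_rate_square_integrable_general {X : Type*} [TopologicalSpace X]
    [LocallyCompactSpace X] [SecondCountableTopology X] [T2Space X]
    [MeasurableSpace X] [BorelSpace X]
    (ν : Measure X) [ν.Regular]
    (μ : Measure (Config X)) [IsProbabilityMeasure μ]
    (r : X → Config X → ℝ)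
    (hMecke : MeckeIdentity ν μ r)
    (a : X → X → ℝ) (ha0 : ∀ x y, 0 ≤ a x y) (hasym : ∀ x y, a x y = a y x)
    (ham : Measurable fun p : X × X => a p.1 p.2)
    (habdd : ∃ M : ℝ, ∀ x y, a x y ≤ M)
    (haint : ⨆ x, ∫⁻ y, ENNReal.ofReal (a x y) ∂ν < ⊤)
    (j : X → ℝ) (hjm : Measurable j)
    (hrj : ∀ x γ, r x γ ≤ j x)
    (hjint : ∀ Λ : Set X, IsB0 Λ → ∫⁻ x in Λ, ENNReal.ofReal (j x) ∂ν < ⊤)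
    (hjbdd : ∃ Λ₀ : Set X, IsB0 Λ₀ ∧ ∃ M : ℝ, ∀ x ∉ Λ₀, j x ≤ M)
    (c : X → X → Config X → ℝ)
    (hc : ∀ x y γ, c x y γ =
      if 0 < r x γ ∧ 0 < r y γ then a x y * r y γ else 0) :
    ∀ Λ : Set X, IsB0 Λ →
      ∫⁻ γ, (∑' x : γ.1, ∫⁻ y,
          ENNReal.ofReal (c (x : X) y (γ.erase (x : X))) *
            (Λ.indicator (1 : X → ℝ≥0∞) (x : X) + Λ.indicator (1 : X → ℝ≥0∞) y) ∂ν) ^ 2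
        ∂μ < ⊤ := by
  intro Λ hΛ
  obtain ⟨Ma, hMa⟩ := habdd
  obtain ⟨Λ₀, hΛ₀, Mj, hMj⟩ := hjbdd
  set A : X → X → ℝ≥0∞ := fun x y => ENNReal.ofReal (a x y)
  set J : X → ℝ≥0∞ := fun y => ENNReal.ofReal (j y)
  set S := ⨆ x, ∫⁻ y, A x y ∂ν
  set B := ENNReal.ofReal Ma * ∫⁻ y in Λ₀, J y ∂ν + ENNReal.ofReal Mj * S with hB_def
  have hA : Measurable (Function.uncurry A) := ham.ennreal_ofReal
  have hJ : Measurable J := hjm.ennreal_ofReal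
  have hcol : ∀ y, ∫⁻ x, A x y ∂ν ≤ S := fun y => by
    simp only [A, hasym _ y]; exact le_iSup (fun x => ∫⁻ y, A x y ∂ν) y
  have hrow : ∀ x, ∫⁻ y, A x y * J y ∂ν ≤ B := fun x =>
    (lintegral_mul_le_of_le_of_le_compl (hA.comp measurable_prodMk_left) hJ hΛ₀.1
      (fun y => ofReal_le_ofReal (hMa x y)) (fun y hy => ofReal_le_ofReal (hMj y hy))).trans
      (by rw [hB_def]; gcongr; exact le_iSup (fun x => ∫⁻ y, A x y ∂ν) x)
  have hφ : Measurable fun x => ∫⁻ y, A x y * J y * (Λ.indicator 1 x + Λ.indicator 1 y) ∂ν :=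
    ((hA.mul (hJ.comp measurable_snd)).mul (((measurable_one.indicator hΛ.1).comp
      measurable_fst).add ((measurable_one.indicator hΛ.1).comp measurable_snd))).lintegral_prod_right'
  have hJΛ := hjint Λ hΛ
  have hJΛ₀ := hjint Λ₀ hΛ₀
  have hB : B < ⊤ := by rw [hB_def]; finiteness
  refine (lintegral_mono fun γ => ?_).trans_lt
    (hMecke.lintegral_tsum_sq_lt_top hrj hjm hφ (C := 2 * B) (by finiteness) (fun x => ?_) ?_)
  · gcongr with x y
    rw [hc]
    exact ofReal_ite_mul_le (ha0 _ _) (hrj _ _)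
  · exact (lintegral_mul_indicator_add_indicator_le _ Λ x).trans (by gcongr; exact hrow x)
  · exact (lintegral_mul_lintegral_indicator_add_le hA hJ hΛ.1 hΛ₀.1 hrow hcol
      (fun x hx => ofReal_le_ofReal (hMj x hx))).trans_lt (by finiteness)

/-- Proposition 3.3, case `s = 1`: for the rate
`c₁(x,y,γ) = a(x,y)·r(y,γ)·𝟙{r(x,γ)>0 ∧ r(y,γ)>0}`, the function
`γ ↦ ∑_{x∈γ} ∫ c₁(x,y,γ\{x})(χ_Λ(x)+χ_Λ(y)) ν(dy)` is square-integrable with respect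
to `μ` for every `Λ ∈ B₀(X)`. -/
theorem example_rate_square_integrable {X : Type*} [TopologicalSpace X]
    [LocallyCompactSpace X] [SecondCountableTopology X] [T2Space X]
    [MeasurableSpace X] [BorelSpace X]
    (ν : Measure X) [ν.Regular] [NullSingletonClass ν]
    (μ : Measure (Config X)) [IsProbabilityMeasure μ]
    (r : X → Config X → ℝ) (hr0 : ∀ x γ, 0 ≤ r x γ)
    (hrm : Measurable fun p : X × Config X => r p.1 p.2)
    (hMecke : MeckeIdentity ν μ r)
    (a : X → X → ℝ) (ha0 : ∀ x y, 0 ≤ a x y) (hasym : ∀ x y, a x y = a y x)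
    (ham : Measurable fun p : X × X => a p.1 p.2)
    (habdd : ∃ M : ℝ, ∀ x y, a x y ≤ M)
    (haint : ⨆ x, ∫⁻ y, ENNReal.ofReal (a x y) ∂ν < ⊤)
    (j : X → ℝ) (hj0 : ∀ x, 0 ≤ j x) (hjm : Measurable j)
    (hrj : ∀ x γ, r x γ ≤ j x)
    (hjint : ∀ Λ : Set X, IsB0 Λ → ∫⁻ x in Λ, ENNReal.ofReal (j x) ∂ν < ⊤)
    (hjbdd : ∃ Λ₀ : Set X, IsB0 Λ₀ ∧ ∃ M : ℝ, ∀ x ∉ Λ₀, j x ≤ M)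
    (c : X → X → Config X → ℝ)
    (hc : ∀ x y γ, c x y γ =
      if 0 < r x γ ∧ 0 < r y γ then a x y * r y γ else 0) :
    ∀ Λ : Set X, IsB0 Λ →
      ∫⁻ γ, (∑' x : γ.1, ∫⁻ y,
          ENNReal.ofReal (c (x : X) y (γ.erase (x : X))) *
            (Λ.indicator (1 : X → ℝ≥0∞) (x : X) + Λ.indicator (1 : X → ℝ≥0∞) y) ∂ν) ^ 2
        ∂μ < ⊤ :=
  example_rate_square_integrable_general ν μ r hMecke a ha0 hasym ham habdd haint j hjm hrj hjint
    hjbdd c hc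
end
end

section
/- (Key pointwise estimate in the proof of Lemma 3.4.) Let X be a metric space, a ∈ X, R > 0, and let B := {z ∈ X : dist(z,a) ≤ R} be the closed ball of radius R around a. Let K ≥ 1 and let f₁,…,f_K : X → [0,1] be functions with f_k(z) = 0 for all z ∉ B and all k. Let ψ : ℝ → ℝ be differentiable with 0 ≤ ψ'(t) ≤ 2 for all t ∈ ℝ. For a set γ ⊆ X with γ ∩ B finite, define u(γ) := ψ(max_{1≤k≤K} ∑_{z∈γ} f_k(z)) (the sums being finite since each f_k vanishes off B). Then for every γ ⊆ X with γ ∩ B finite, every x ∈ γ and every y ∈ X \ γ, one has (u((γ\{x})∪{y}) − u(γ))² ≤ 8·(χ_B(x) + χ_B(y)), where χ_B denotes the indicator function of B. -/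
/-- Key pointwise estimate in the proof of Lemma 3.4: for `f₁,…,f_K : X → [0,1]`
vanishing off the closed ball `B = B̄(a,R)`, and `ψ` differentiable with `0 ≤ ψ' ≤ 2`,
the function `u(γ) = ψ(max_k ∑_{z∈γ} f_k(z))` satisfies
`(u((γ\{x})∪{y}) − u(γ))² ≤ 8(χ_B(x) + χ_B(y))` for every `γ ⊆ X` with `γ ∩ B` finite,
every `x ∈ γ` and every `y ∉ γ`. -/
theorem jump_estimate {X : Type*} [MetricSpace X] (a : X) (R : ℝ) (hR : 0 < R)
    (K : ℕ) (hK : 1 ≤ K) (f : Fin K → X → ℝ)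
    (hf01 : ∀ k z, f k z ∈ Set.Icc (0 : ℝ) 1)
    (hfB : ∀ k z, z ∉ Metric.closedBall a R → f k z = 0)
    (ψ : ℝ → ℝ) (hψ : Differentiable ℝ ψ)
    (hψ' : ∀ t, deriv ψ t ∈ Set.Icc (0 : ℝ) 2)
    (u : Set X → ℝ)
    (hu : ∀ γ : Set X, (γ ∩ Metric.closedBall a R).Finite →
      u γ = ψ (⨆ k : Fin K, ∑' z : γ, f k (z : X))) :
    ∀ γ : Set X, (γ ∩ Metric.closedBall a R).Finite →
      ∀ x ∈ γ, ∀ y ∉ γ,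
        (u ((γ \ {x}) ∪ {y}) - u γ) ^ 2 ≤
          8 * ((Metric.closedBall a R).indicator 1 x +
            (Metric.closedBall a R).indicator 1 y) := by
  classical
  intro γ hγfin x hx y hy
  haveI : Nonempty (Fin K) := ⟨⟨0, hK⟩⟩
  set B := Metric.closedBall a R with hB
  set γ' : Set X := (γ \ {x}) ∪ {y} with hγ'
  have hγ'fin : (γ' ∩ B).Finite := by
    apply ((hγfin.union (Set.finite_singleton y)).subset)
    rintro z ⟨hz1, hz2⟩
    rcases hz1 with h | h
    · exact Or.inl ⟨h.1, hz2⟩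
    · exact Or.inr h
  -- tsum formula
  have tsum_eq : ∀ (δ : Set X) (hδ : (δ ∩ B).Finite) (k : Fin K),
      ∑' z : δ, f k (z : X) = ∑ z ∈ hδ.toFinset, f k z := by
    intro δ hδ k
    rw [tsum_subtype]
    rw [tsum_eq_sum (s := hδ.toFinset) (f := δ.indicator (f k)) ?_]
    · apply Finset.sum_congr rfl
      intro z hz
      simp only [Set.Finite.mem_toFinset, Set.mem_inter_iff] at hz
      exact Set.indicator_of_mem hz.1 _
    · intro b hb
      simp only [Set.Finite.mem_toFinset, Set.mem_inter_iff, not_and] at hb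
      by_cases hbδ : b ∈ δ
      · rw [Set.indicator_of_mem hbδ]; exact hfB k b (hb hbδ)
      · exact Set.indicator_of_notMem hbδ _
  set s := hγfin.toFinset with hs
  set s' := hγ'fin.toFinset with hs'
  -- sum over new configuration
  have hsum' : ∀ k : Fin K, ∑ z ∈ s', f k z
      = ∑ z ∈ s.erase x, f k z + B.indicator (f k) y := by
    intro k
    by_cases hyB : y ∈ B
    · have hseq : s' = insert y (s.erase x) := by
        ext z
        simp only [hs', hs, Set.Finite.mem_toFinset, Finset.mem_insert, Finset.mem_erase,
          Set.mem_inter_iff, Set.mem_union, Set.mem_diff, Set.mem_singleton_iff, hγ']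
        constructor
        · rintro ⟨h1 | h1, h2⟩
          · exact Or.inr ⟨h1.2, h1.1, h2⟩
          · exact Or.inl h1
        · rintro (rfl | ⟨h1, h2, h3⟩)
          · exact ⟨Or.inr rfl, hyB⟩
          · exact ⟨Or.inl ⟨h2, h1⟩, h3⟩
      have hynot : y ∉ s.erase x := by
        simp only [hs, Finset.mem_erase, Set.Finite.mem_toFinset, Set.mem_inter_iff]
        rintro ⟨-, hyγ, -⟩; exact hy hyγ
      rw [hseq, Finset.sum_insert hynot, Set.indicator_of_mem hyB, add_comm]
    · have hseq : s' = s.erase x := by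
        ext z
        simp only [hs', hs, Set.Finite.mem_toFinset, Finset.mem_erase,
          Set.mem_inter_iff, Set.mem_union, Set.mem_diff, Set.mem_singleton_iff, hγ']
        constructor
        · rintro ⟨h1 | h1, h2⟩
          · exact ⟨h1.2, h1.1, h2⟩
          · exact absurd h2 (h1 ▸ hyB)
        · rintro ⟨h1, h2, h3⟩
          exact ⟨Or.inl ⟨h2, h1⟩, h3⟩
      rw [hseq, Set.indicator_of_notMem hyB, add_zero]
  -- sum over old configuration
  have hsum : ∀ k : Fin K, ∑ z ∈ s, f k z
      = ∑ z ∈ s.erase x, f k z + B.indicator (f k) x := by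
    intro k
    by_cases hxB : x ∈ B
    · have hxs : x ∈ s := by simp [hs, Set.Finite.mem_toFinset, hx, hxB]
      rw [Set.indicator_of_mem hxB, Finset.sum_erase_add s _ hxs]
    · have hxs : x ∉ s := by
        simp only [hs, Set.Finite.mem_toFinset, Set.mem_inter_iff, not_and]
        exact fun _ => hxB
      rw [Set.indicator_of_notMem hxB, add_zero, Finset.erase_eq_of_notMem hxs]
  -- the indicator bounds
  set c : ℝ := B.indicator 1 x + B.indicator 1 y with hc
  have hind : ∀ (k : Fin K) (z : X),
      B.indicator (f k) z ∈ Set.Icc (0 : ℝ) (B.indicator 1 z) := by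
    intro k z
    by_cases hzB : z ∈ B
    · rw [Set.indicator_of_mem hzB, Set.indicator_of_mem hzB]
      exact ⟨(hf01 k z).1, (hf01 k z).2⟩
    · rw [Set.indicator_of_notMem hzB, Set.indicator_of_notMem hzB]
      exact ⟨le_refl 0, le_refl 0⟩
  have hind1 : ∀ z : X, B.indicator (1 : X → ℝ) z ∈ Set.Icc (0 : ℝ) 1 := by
    intro z
    by_cases hzB : z ∈ B
    · rw [Set.indicator_of_mem hzB]; exact ⟨zero_le_one, le_refl 1⟩
    · rw [Set.indicator_of_notMem hzB]; exact ⟨le_refl 0, zero_le_one⟩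
  have hc0 : 0 ≤ c := add_nonneg (hind1 x).1 (hind1 y).1
  have hc2 : c ≤ 2 := by
    have := (hind1 x).2; have := (hind1 y).2; unfold c; linarith
  -- per-k difference bound
  have hk : ∀ k : Fin K,
      |∑ z ∈ s', f k z - ∑ z ∈ s, f k z| ≤ c := by
    intro k
    rw [hsum' k, hsum k]
    have h1 := hind k x
    have h2 := hind k y
    rw [abs_le]
    constructor
    · have := h1.2; have := h2.1; unfold c; linarith [(hind1 y).1]
    · have := h2.2; have := h1.1; unfold c; linarith [(hind1 x).1]
  -- sup difference bound
  set S : Fin K → ℝ := fun k => ∑ z ∈ s, f k z with hS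
  set S' : Fin K → ℝ := fun k => ∑ z ∈ s', f k z with hS'
  have hbdd : BddAbove (Set.range S) := Set.Finite.bddAbove (Set.finite_range S)
  have hbdd' : BddAbove (Set.range S') := Set.Finite.bddAbove (Set.finite_range S')
  have hsup1 : (⨆ k, S' k) ≤ (⨆ k, S k) + c := by
    apply ciSup_le
    intro k
    have := (abs_le.1 (hk k)).2
    have h2 : S k ≤ ⨆ k, S k := le_ciSup hbdd k
    simp only [hS, hS'] at *
    linarith
  have hsup2 : (⨆ k, S k) ≤ (⨆ k, S' k) + c := by
    apply ciSup_le
    intro k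
    have := (abs_le.1 (hk k)).1
    have h2 : S' k ≤ ⨆ k, S' k := le_ciSup hbdd' k
    simp only [hS, hS'] at *
    linarith
  have hsup : |(⨆ k, S' k) - (⨆ k, S k)| ≤ c := by
    rw [abs_le]; constructor <;> linarith
  -- Lipschitz bound on ψ
  have hlip : LipschitzWith 2 ψ := by
    apply lipschitzWith_of_nnnorm_deriv_le hψ
    intro t
    have h := hψ' t
    rw [← NNReal.coe_le_coe]
    simp only [coe_nnnorm, Real.norm_eq_abs, NNReal.coe_ofNat]
    rw [abs_le]; exact ⟨by linarith [h.1], h.2⟩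
  have hψbd : |ψ (⨆ k, S' k) - ψ (⨆ k, S k)| ≤ 2 * c := by
    have := hlip.dist_le_mul (⨆ k, S' k) (⨆ k, S k)
    rw [Real.dist_eq, Real.dist_eq] at this
    calc |ψ (⨆ k, S' k) - ψ (⨆ k, S k)| ≤ 2 * |(⨆ k, S' k) - (⨆ k, S k)| := by
          simpa using this
      _ ≤ 2 * c := by linarith
  -- put it together
  have huγ' : u γ' = ψ (⨆ k, S' k) := by
    rw [hu γ' hγ'fin]
    congr 1
    exact iSup_congr (fun k => tsum_eq γ' hγ'fin k)
  have huγ : u γ = ψ (⨆ k, S k) := by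
    rw [hu γ hγfin]
    congr 1
    exact iSup_congr (fun k => tsum_eq γ hγfin k)
  have : (u γ' - u γ) ^ 2 ≤ 8 * c := by
    rw [huγ', huγ]
    have habs := abs_le.1 hψbd
    nlinarith [habs.1, habs.2, hc0, hc2]
  exact this
end
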